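/- Let φ solve the stationary Adkins–Nappi equation and suppose φ'(r₀) = φ''(r₀) = 0 at some r₀ > 0, with φ(r₀) not an integer or half-integer multiple of π (so sin 2φ(r₀) ≠ 0 and the equation forces r₀² = −sin 2φ₀ (φ₀ − sin φ₀ cos φ₀)^{−1}(1 − cos 2φ₀)^{−1} > 0). Then φ'''(r₀) < 0; consequently there exists δ > 0 such that φ'(r) < 0 for all r with 0 < |r − r₀| < δ. -/

import Mathlib

open Real Set

theorem stmt6 (φ : ℝ → ℝ) (r₀ : ℝ) (hr₀ : 0 < r₀)
    (hsmooth : ContDiffOn ℝ (⊤ : ℕ∞) φ (Set.Ioi 0))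
    (heq : ∀ r ∈ Set.Ioi (0:ℝ),
      deriv (deriv φ) r + (2/r) * deriv φ r =
        Real.sin (2 * φ r) / r^2 +
          (φ r - Real.sin (φ r) * Real.cos (φ r)) * (1 - Real.cos (2 * φ r)) / r^4)
    (hpos : 0 < φ r₀)
    (h1 : deriv φ r₀ = 0) (h2 : deriv (deriv φ) r₀ = 0)
    (h3 : Real.sin (2 * φ r₀) ≠ 0) :
    deriv (deriv (deriv φ)) r₀ < 0 ∧
      ∃ δ > 0, ∀ r : ℝ, 0 < |r - r₀| → |r - r₀| < δ → deriv φ r < 0 := by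
  have hopen : IsOpen (Set.Ioi (0:ℝ)) := isOpen_Ioi
  have hmem : Set.Ioi (0:ℝ) ∈ nhds r₀ := hopen.mem_nhds hr₀
  have hs1 : ContDiffOn ℝ (⊤ : ℕ∞) (deriv φ) (Set.Ioi 0) := hsmooth.deriv_of_isOpen hopen (by simp)
  have hs2 : ContDiffOn ℝ (⊤ : ℕ∞) (deriv (deriv φ)) (Set.Ioi 0) := hs1.deriv_of_isOpen hopen (by simp)
  have hs3 : ContDiffOn ℝ (⊤ : ℕ∞) (deriv (deriv (deriv φ))) (Set.Ioi 0) :=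
    hs2.deriv_of_isOpen hopen (by simp)
  have hd0 : DifferentiableAt ℝ φ r₀ :=
    ((hsmooth.differentiableOn (by simp)).differentiableAt hmem)
  have hd1 : DifferentiableAt ℝ (deriv φ) r₀ :=
    ((hs1.differentiableOn (by simp)).differentiableAt hmem)
  have hA : HasDerivAt φ 0 r₀ := h1 ▸ hd0.hasDerivAt
  have hB : HasDerivAt (deriv φ) 0 r₀ := h2 ▸ hd1.hasDerivAt
  set g : ℝ → ℝ := fun r => Real.sin (2 * φ r) / r^2 +
      (φ r - Real.sin (φ r) * Real.cos (φ r)) * (1 - Real.cos (2 * φ r)) / r^4 -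
      (2/r) * deriv φ r with hgdef
  have hEq : deriv (deriv φ) =ᶠ[nhds r₀] g := by
    filter_upwards [hmem] with r hr
    have := heq r hr
    simp only [hgdef]
    linarith
  have hr₀ne : r₀ ≠ 0 := ne_of_gt hr₀
  have h2a : HasDerivAt (fun r => 2 * φ r) (2 * 0) r₀ := hA.const_mul 2
  have hsin2 : HasDerivAt (fun r => Real.sin (2 * φ r)) (Real.cos (2 * φ r₀) * (2 * 0)) r₀ :=
    h2a.sin
  have hcos2 : HasDerivAt (fun r => Real.cos (2 * φ r)) (-Real.sin (2 * φ r₀) * (2 * 0)) r₀ :=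
    h2a.cos
  have hpow2 : HasDerivAt (fun r : ℝ => r^2) (2 * r₀ ^ 1) r₀ := by
    simpa using hasDerivAt_pow 2 r₀
  have hpow4 : HasDerivAt (fun r : ℝ => r^4) (4 * r₀ ^ 3) r₀ := by
    simpa using hasDerivAt_pow 4 r₀
  have hpow2ne : r₀ ^ 2 ≠ 0 := pow_ne_zero _ hr₀ne
  have hpow4ne : r₀ ^ 4 ≠ 0 := pow_ne_zero _ hr₀ne
  have hg1 := hsin2.div hpow2 hpow2ne
  have hnum := (hA.sub ((hA.sin).mul (hA.cos))).mul ((hasDerivAt_const r₀ 1).sub hcos2)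
  have hg2 := hnum.div hpow4 hpow4ne
  have hfrac := (hasDerivAt_const r₀ 2).div (hasDerivAt_id r₀) hr₀ne
  have hg3 := hfrac.mul hB
  have hgd : HasDerivAt g _ r₀ := (hg1.add hg2).sub hg3
  have hval : deriv (deriv (deriv φ)) r₀ =
      -2 * Real.sin (2 * φ r₀) / r₀^3 -
        4 * ((φ r₀ - Real.sin (φ r₀) * Real.cos (φ r₀)) * (1 - Real.cos (2 * φ r₀))) / r₀^5 := by
    rw [hEq.deriv_eq, hgd.deriv, h1]
    field_simp
    simp only [Pi.mul_apply, Pi.sub_apply, Pi.add_apply, Pi.neg_apply]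
    ring
  have heq0 : Real.sin (2 * φ r₀) / r₀^2 +
      (φ r₀ - Real.sin (φ r₀) * Real.cos (φ r₀)) * (1 - Real.cos (2 * φ r₀)) / r₀^4 = 0 := by
    have := heq r₀ hr₀
    rw [h1, h2] at this
    linarith
  have hkey : Real.sin (2 * φ r₀) * r₀^2 +
      (φ r₀ - Real.sin (φ r₀) * Real.cos (φ r₀)) * (1 - Real.cos (2 * φ r₀)) = 0 := by
    have h' : r₀^2 * (Real.sin (2 * φ r₀) * r₀^2 +
        (φ r₀ - Real.sin (φ r₀) * Real.cos (φ r₀)) * (1 - Real.cos (2 * φ r₀))) = 0 := by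
      field_simp at heq0
      linear_combination r₀^2 * heq0
    exact (mul_eq_zero.mp h').resolve_left hpow2ne
  have hsin_eq : Real.sin (2 * φ r₀) =
      -((φ r₀ - Real.sin (φ r₀) * Real.cos (φ r₀)) * (1 - Real.cos (2 * φ r₀))) / r₀^2 := by
    rw [eq_div_iff hpow2ne]
    linarith
  have hfac1 : 0 < φ r₀ - Real.sin (φ r₀) * Real.cos (φ r₀) := by
    have h2a0 : 0 < 2 * φ r₀ := by linarith
    have := Real.sin_lt h2a0
    rw [Real.sin_two_mul] at this
    nlinarith
  have hfac2 : 0 < 1 - Real.cos (2 * φ r₀) := by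
    rcases lt_or_eq_of_le (Real.cos_le_one (2 * φ r₀)) with h | h
    · linarith
    · exfalso
      apply h3
      nlinarith [Real.sin_sq_add_cos_sq (2 * φ r₀)]
  have hNpos : 0 < (φ r₀ - Real.sin (φ r₀) * Real.cos (φ r₀)) * (1 - Real.cos (2 * φ r₀)) :=
    mul_pos hfac1 hfac2
  have hdd3 : deriv (deriv (deriv φ)) r₀ < 0 := by
    rw [hval, hsin_eq]
    have h5 : (0:ℝ) < r₀^5 := pow_pos hr₀ 5
    have heq' : -2 * (-((φ r₀ - Real.sin (φ r₀) * Real.cos (φ r₀)) * (1 - Real.cos (2 * φ r₀))) / r₀^2) / r₀^3 -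
        4 * ((φ r₀ - Real.sin (φ r₀) * Real.cos (φ r₀)) * (1 - Real.cos (2 * φ r₀))) / r₀^5 =
        -2 * ((φ r₀ - Real.sin (φ r₀) * Real.cos (φ r₀)) * (1 - Real.cos (2 * φ r₀))) / r₀^5 := by
      field_simp
      ring
    rw [heq']
    apply div_neg_of_neg_of_pos (by linarith) h5
  refine ⟨hdd3, ?_⟩
  -- Part 2
  have hχcont : ContinuousAt (deriv (deriv (deriv φ))) r₀ :=
    (hs3.continuousOn.continuousAt hmem)
  have hev : ∀ᶠ r in nhds r₀, deriv (deriv (deriv φ)) r < 0 :=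
    hχcont (Iio_mem_nhds hdd3)
  rw [Metric.eventually_nhds_iff] at hev
  obtain ⟨ε, hε, hevb⟩ := hev
  refine ⟨min ε (r₀/2), by positivity, ?_⟩
  set δ := min ε (r₀/2) with hδ
  have hδε : δ ≤ ε := min_le_left _ _
  have hδr : δ ≤ r₀/2 := min_le_right _ _
  have hsub : Set.Icc (r₀ - δ) (r₀ + δ) ⊆ Set.Ioi (0:ℝ) := by
    intro x hx
    simp only [Set.mem_Icc] at hx
    simp only [Set.mem_Ioi]
    linarith
  have hcont2 : ContinuousOn (deriv (deriv φ)) (Set.Icc (r₀ - δ) (r₀ + δ)) :=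
    hs2.continuousOn.mono hsub
  have hχneg : ∀ x ∈ Set.Ioo (r₀ - δ) (r₀ + δ), deriv (deriv (deriv φ)) x < 0 := by
    intro x hx
    apply hevb
    simp only [Set.mem_Ioo] at hx
    rw [Real.dist_eq, abs_lt]
    constructor <;> linarith
  have hanti : StrictAntiOn (deriv (deriv φ)) (Set.Icc (r₀ - δ) (r₀ + δ)) := by
    apply strictAntiOn_of_deriv_neg (convex_Icc _ _) hcont2
    intro x hx
    rw [interior_Icc] at hx
    exact hχneg x hx
  have hδpos : 0 < δ := by positivity
  have hr₀mem : r₀ ∈ Set.Icc (r₀ - δ) (r₀ + δ) := by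
    constructor <;> [linarith; linarith]
  -- deriv φ strictly increasing on [r₀ - δ, r₀]
  have hcont1L : ContinuousOn (deriv φ) (Set.Icc (r₀ - δ) r₀) :=
    hs1.continuousOn.mono (fun x hx => hsub ⟨hx.1, by linarith [hx.2]⟩)
  have hcont1R : ContinuousOn (deriv φ) (Set.Icc r₀ (r₀ + δ)) :=
    hs1.continuousOn.mono (fun x hx => hsub ⟨by linarith [hx.1], hx.2⟩)
  have hmono : StrictMonoOn (deriv φ) (Set.Icc (r₀ - δ) r₀) := by
    apply strictMonoOn_of_deriv_pos (convex_Icc _ _) hcont1L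
    intro x hx
    rw [interior_Icc] at hx
    have hx1 : x ∈ Set.Icc (r₀ - δ) (r₀ + δ) := ⟨le_of_lt hx.1, by linarith [hx.2]⟩
    have := hanti hx1 hr₀mem hx.2
    rw [h2] at this
    exact this
  have hanti1 : StrictAntiOn (deriv φ) (Set.Icc r₀ (r₀ + δ)) := by
    apply strictAntiOn_of_deriv_neg (convex_Icc _ _) hcont1R
    intro x hx
    rw [interior_Icc] at hx
    have hx1 : x ∈ Set.Icc (r₀ - δ) (r₀ + δ) := ⟨by linarith [hx.1], le_of_lt hx.2⟩
    have := hanti hr₀mem hx1 hx.1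
    rw [h2] at this
    exact this
  intro r hr hrδ
  rcases lt_or_gt_of_ne (fun h : r = r₀ => by simp [h] at hr) with hlt | hgt
  · have habs : r₀ - r < δ := by
      rw [abs_sub_comm, abs_of_pos (by linarith)] at hrδ
      exact hrδ
    have := hmono (a := r) (b := r₀) ⟨by linarith, le_of_lt hlt⟩ ⟨by linarith, le_refl _⟩ hlt
    rw [h1] at this
    exact this
  · have habs : r - r₀ < δ := by
      rw [abs_of_pos (by linarith)] at hrδ
      exact hrδ
    have := hanti1 (a := r₀) (b := r) ⟨le_refl _, by linarith⟩ ⟨le_of_lt hgt, by linarith⟩ hgt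
    rw [h1] at this
    exact this
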